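/- Suppose a ≥ 1, a·(m+1) = b·(n+1) (i.e. s₁ = s₂), and moreover d = 0 or d·(n+1) ≠ a·(m+1) (i.e. s₁ ≠ s₃ when s₃ is defined). Then lim_{s→s₁} (s−s₁)²·Z_{n,m}(s) = (c−a)/(a·(bc−ad)), which is a strictly positive rational number; consequently s₁ is a pole of order exactly two of Z_{n,m}. -/

import Mathlib

/-- The local topological zeta function of the monomial ideal
`I = (x^a y^b, x^c y^d) ⊆ ℂ[x,y]` with respect to the volume form
`x^n y^m dx ∧ dy`, as a function `ℚ → ℚ`. -/
noncomputable def Z (a b c d n m : ℕ) (s : ℚ) : ℚ :=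
  ((c : ℚ) - a) /
      (((a : ℚ) * s + n + 1) *
        (((b : ℚ) * c - (a : ℚ) * d) * s + ((b : ℚ) - d) * (n + 1) + ((c : ℚ) - a) * (m + 1))) +
    ((b : ℚ) - d) /
      ((((b : ℚ) * c - (a : ℚ) * d) * s + ((b : ℚ) - d) * (n + 1) + ((c : ℚ) - a) * (m + 1)) *
        ((d : ℚ) * s + m + 1))

/-- `s₀` is a pole of order `k` of `Z` if `lim_{s → s₀} (s - s₀)^k * Z s`
exists and is nonzero. -/
def IsPoleOfOrder (Z : ℚ → ℚ) (s₀ : ℚ) (k : ℕ) : Prop :=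
  ∃ L : ℚ, L ≠ 0 ∧
    Filter.Tendsto (fun s => (s - s₀) ^ k * Z s) (nhdsWithin s₀ {s₀}ᶜ) (nhds L)

/-- `s₀` is a pole of `Z` if it is a pole of some order `k ≥ 1`. -/
def IsPole (Z : ℚ → ℚ) (s₀ : ℚ) : Prop :=
  ∃ k : ℕ, 1 ≤ k ∧ IsPoleOfOrder Z s₀ k

open Filter Topology

/-!
The factor `a s + n + 1` vanishes at `s₁ = -(n + 1)/a` and, because `a (m + 1) = b (n + 1)`, so
does `(bc - ad) s + (b - d)(n + 1) + (c - a)(m + 1)`. Hence for `s ≠ s₁`, `(s - s₁)² Z(s)` equals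
`(c - a)/(a (bc - ad)) + (b - d)(s - s₁)/((bc - ad)(d s + m + 1))`. The last factor does not
vanish at `s₁` because `d (n + 1) ≠ a (m + 1)`, so this tends to `(c - a)/(a (bc - ad)) > 0`.
A function has at most one pole order at a point, since a limit of `(s - s₀)^j f(s)` forces
`(s - s₀)^k f(s) → 0` for every `k > j`.
-/

theorem IsPoleOfOrder.not_of_lt {f : ℚ → ℚ} {s₀ : ℚ} {j k : ℕ} (hj : IsPoleOfOrder f s₀ j)
    (hjk : j < k) : ¬ IsPoleOfOrder f s₀ k := by
  rintro ⟨L, hL, hk⟩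
  obtain ⟨M, -, hj⟩ := hj
  have hsub : Tendsto (fun s => s - s₀) (𝓝[≠] s₀) (𝓝 0) :=
    tendsto_sub_nhds_zero_iff.mpr (tendsto_nhdsWithin_of_tendsto_nhds tendsto_id)
  have hpow : Tendsto (fun s => (s - s₀) ^ (k - j)) (𝓝[≠] s₀) (𝓝 0) := by
    simpa [zero_pow (Nat.sub_ne_zero_of_lt hjk)] using hsub.pow (k - j)
  have hzero : Tendsto (fun s => (s - s₀) ^ k * f s) (𝓝[≠] s₀) (𝓝 0) := by
    simpa [← mul_assoc, ← pow_add, Nat.sub_add_cancel hjk.le] using hpow.mul hj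
  exact hL (tendsto_nhds_unique hk hzero)

theorem IsPoleOfOrder.eq {f : ℚ → ℚ} {s₀ : ℚ} {j k : ℕ} (hj : IsPoleOfOrder f s₀ j)
    (hk : IsPoleOfOrder f s₀ k) : j = k := by
  rcases lt_trichotomy j k with h | h | h
  · exact absurd hk (hj.not_of_lt h)
  · exact h
  · exact absurd hj (hk.not_of_lt h)

section Zeta

variable {a b c d n m : ℕ}

theorem Z_first_factor_eq (ha : a ≠ 0) (s : ℚ) :
    (a : ℚ) * s + n + 1 = a * (s - -((n : ℚ) + 1) / a) := by
  field_simp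
  ring

theorem Z_middle_factor_eq (ha : a ≠ 0) (h12 : a * (m + 1) = b * (n + 1)) (s : ℚ) :
    ((b : ℚ) * c - (a : ℚ) * d) * s + ((b : ℚ) - d) * (n + 1) + ((c : ℚ) - a) * (m + 1) =
      ((b : ℚ) * c - (a : ℚ) * d) * (s - -((n : ℚ) + 1) / a) := by
  have h12' : (a : ℚ) * (m + 1) = b * (n + 1) := by exact_mod_cast h12
  field_simp
  linear_combination ((c : ℚ) - a) * h12'

theorem Z_last_factor_ne_zero (ha : a ≠ 0) (h13 : d = 0 ∨ d * (n + 1) ≠ a * (m + 1)) :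
    (d : ℚ) * (-((n : ℚ) + 1) / a) + m + 1 ≠ 0 := by
  have h13' : (d : ℚ) * (n + 1) ≠ a * (m + 1) := by
    rcases h13 with rfl | h
    · simp only [CharP.cast_eq_zero, zero_mul]
      positivity
    · exact_mod_cast h
  rw [show (d : ℚ) * (-((n : ℚ) + 1) / a) + m + 1 = (a * (m + 1) - d * (n + 1)) / a by
    field_simp; ring]
  exact div_ne_zero (sub_ne_zero.mpr h13'.symm) (by exact_mod_cast ha)

theorem sq_mul_Z_eq (ha : a ≠ 0) (h12 : a * (m + 1) = b * (n + 1)) {s : ℚ}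
    (hs : s ≠ -((n : ℚ) + 1) / a) :
    (s - -((n : ℚ) + 1) / a) ^ 2 * Z a b c d n m s =
      ((c : ℚ) - a) / ((a : ℚ) * ((b : ℚ) * c - (a : ℚ) * d)) +
        ((b : ℚ) - d) * (s - -((n : ℚ) + 1) / a) /
          (((b : ℚ) * c - (a : ℚ) * d) * ((d : ℚ) * s + m + 1)) := by
  have ht : s - -((n : ℚ) + 1) / a ≠ 0 := sub_ne_zero.mpr hs
  rw [Z, Z_first_factor_eq ha, Z_middle_factor_eq ha h12]
  generalize s - -((n : ℚ) + 1) / a = t at ht ⊢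
  rw [mul_add]
  congr 1 <;> field_simp

theorem tendsto_sq_mul_Z (ha : a ≠ 0) (h12 : a * (m + 1) = b * (n + 1))
    (h13 : d = 0 ∨ d * (n + 1) ≠ a * (m + 1)) (hK : (b : ℚ) * c - (a : ℚ) * d ≠ 0) :
    Tendsto (fun s => (s - -((n : ℚ) + 1) / a) ^ 2 * Z a b c d n m s)
      (𝓝[≠] (-((n : ℚ) + 1) / a))
      (𝓝 (((c : ℚ) - a) / ((a : ℚ) * ((b : ℚ) * c - (a : ℚ) * d)))) := by
  set s₁ : ℚ := -((n : ℚ) + 1) / a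
  have hcont : ContinuousAt (fun s => ((c : ℚ) - a) / ((a : ℚ) * ((b : ℚ) * c - (a : ℚ) * d)) +
      ((b : ℚ) - d) * (s - s₁) / (((b : ℚ) * c - (a : ℚ) * d) * ((d : ℚ) * s + m + 1))) s₁ := by
    have := mul_ne_zero hK (Z_last_factor_ne_zero ha h13)
    fun_prop (disch := assumption)
  refine ((hcont.tendsto.mono_left nhdsWithin_le_nhds).congr' ?_).trans_eq ?_
  · filter_upwards [self_mem_nhdsWithin] with s hs
    exact (sq_mul_Z_eq ha h12 hs).symm
  · simp

end Zeta

theorem stmt2 (a b c d n m : ℕ) (hac : a < c) (hdb : d < b) (ha : 1 ≤ a)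
    (h12 : a * (m + 1) = b * (n + 1))
    (h13 : d = 0 ∨ d * (n + 1) ≠ a * (m + 1)) :
    Filter.Tendsto (fun s => (s - (-((n : ℚ) + 1) / a)) ^ 2 * Z a b c d n m s)
        (nhdsWithin (-((n : ℚ) + 1) / a) {(-((n : ℚ) + 1) / a)}ᶜ)
        (nhds (((c : ℚ) - a) / ((a : ℚ) * ((b : ℚ) * c - (a : ℚ) * d)))) ∧
      0 < ((c : ℚ) - a) / ((a : ℚ) * ((b : ℚ) * c - (a : ℚ) * d)) ∧
      IsPoleOfOrder (Z a b c d n m) (-((n : ℚ) + 1) / a) 2 ∧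
      ∀ k : ℕ, 1 ≤ k → k ≠ 2 → ¬ IsPoleOfOrder (Z a b c d n m) (-((n : ℚ) + 1) / a) k := by
  have ha0 : a ≠ 0 := by omega
  have hac' : (a : ℚ) < c := by exact_mod_cast hac
  have hdb' : (d : ℚ) < b := by exact_mod_cast hdb
  have hK : 0 < (b : ℚ) * c - (a : ℚ) * d := by nlinarith [(Nat.cast_nonneg a : (0 : ℚ) ≤ a)]
  have hL : 0 < ((c : ℚ) - a) / ((a : ℚ) * ((b : ℚ) * c - (a : ℚ) * d)) :=
    div_pos (sub_pos.mpr hac') (mul_pos (by exact_mod_cast ha) hK)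
  have hlim := tendsto_sq_mul_Z ha0 h12 h13 hK.ne'
  have hpole : IsPoleOfOrder (Z a b c d n m) (-((n : ℚ) + 1) / a) 2 := ⟨_, hL.ne', hlim⟩
  exact ⟨hlim, hL, hpole, fun k _ hk hpk => hk (hpk.eq hpole)⟩
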